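/- arXiv:2509.08293 — 2 statements merged into one kernel-verified Lean document; each statement's English description precedes it below -/
import Mathlib

section
/- Let 1 ≤ p, q, r ≤ ∞ with 1/p = 1/q + 1/r. For every u in the algebraic tensor product E₁ ⊗ ⋯ ⊗ E_m ⊗ F of Banach lattices, ε(u) ≤ μ⁺_{(q,r)}(u) ≤ π(u), where ε and π are the injective and projective tensor norms. -/
/-!
For `ε ≤ μ⁺`: given `u = ∑ᵢ λᵢ xᵢ¹ ⊗ ⋯ ⊗ xᵢᵐ ⊗ yᵢ` and functionals `f₁, …, fₘ, g` of norm at most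
one, Hölder's inequality for `1/p = 1/q + 1/r` bounds `|∑ᵢ λᵢ ∏ⱼ fⱼ(xᵢʲ) g(yᵢ)|` by
`‖λ‖_{p*} ‖(∏ⱼ fⱼ(xᵢʲ))ᵢ‖_q ‖(g(yᵢ))ᵢ‖_r`. Replacing each functional `f` by its modulus `|f|`, a
positive functional with `‖|f|‖ ≤ ‖f‖` and `|f z| ≤ |f| |z|` (Riesz–Kantorovich), turns the last two
factors into the weak norms in the definition of `μ⁺`.

For `μ⁺ ≤ π`: with `aᵢ = |λᵢ| ∏ⱼ ‖xᵢʲ‖ ‖yᵢ‖`, rescale the terms so that `|λᵢ| = aᵢ^{1/p*}`,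
`∏ⱼ ‖xᵢʲ‖ = aᵢ^{1/q}` and `‖yᵢ‖ = aᵢ^{1/r}`. The three factors of `μ⁺` are then at most
`(∑ aᵢ)^{1/p*}`, `(∑ aᵢ)^{1/q}` and `(∑ aᵢ)^{1/r}`, whose product is `∑ aᵢ`. When `m = 0` the
`xᵢ` cannot be rescaled, but then `u` is a single elementary tensor.
-/

open scoped BigOperators TensorProduct
open PiTensorProduct

section

variable {m : ℕ} {E : Fin m → Type*}
  [∀ i, NormedAddCommGroup (E i)] [∀ i, Lattice (E i)] [∀ i, IsOrderedAddMonoid (E i)]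
  [∀ i, HasSolidNorm (E i)] [∀ i, NormedSpace ℝ (E i)]
  {F : Type*} [NormedAddCommGroup F] [Lattice F] [IsOrderedAddMonoid F] [HasSolidNorm F]
  [NormedSpace ℝ F]

/-- A continuous `m`-linear form is positive if it is nonnegative on positive tuples. -/
def IsPosForm (φ : ContinuousMultilinearMap ℝ E ℝ) : Prop :=
  ∀ x : ∀ i, E i, (∀ i, 0 ≤ x i) → 0 ≤ φ x

/-- The `ℓ_{p*}^n` norm of scalars, expressed by `ℓ_p`-duality. -/
noncomputable def dualLpNorm (p : ℝ) {n : ℕ} (lam : Fin n → ℝ) : ℝ :=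
  ⨆ t : {t : Fin n → ℝ // (∑ i, |t i| ^ p) ^ (1 / p) ≤ 1}, |∑ i, t.1 i * lam i|

/-- `sup_{φ ∈ B⁺_{L^r}} (∑ᵢ φ(|x_i^1|,…,|x_i^m|)^q)^{1/q}`. -/
noncomputable def weakAbsTensorNorm (q : ℝ) {n : ℕ} (x : Fin n → ∀ j, E j) : ℝ :=
  ⨆ φ : {φ : ContinuousMultilinearMap ℝ E ℝ // ‖φ‖ ≤ 1 ∧ IsPosForm φ},
    (∑ i, (φ.1 (fun j => |x i j|)) ^ q) ^ (1 / q)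

/-- `sup_{y* ∈ B⁺_{F*}} (∑ᵢ ⟨y*, |y_i|⟩^r)^{1/r}`. -/
noncomputable def weakAbsLatticeNorm (r : ℝ) {n : ℕ} (y : Fin n → F) : ℝ :=
  ⨆ g : {g : F →L[ℝ] ℝ // ‖g‖ ≤ 1 ∧ ∀ z : F, 0 ≤ z → 0 ≤ g z},
    (∑ i, (g.1 |y i|) ^ r) ^ (1 / r)

/-- The tensor norm `μ⁺_{(q,r)}`. -/
noncomputable def muPlus (p q r : ℝ) (u : (⨂[ℝ] j, E j) ⊗[ℝ] F) : ℝ :=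
  sInf {c : ℝ | ∃ (n : ℕ) (lam : Fin n → ℝ) (x : Fin n → ∀ j, E j) (y : Fin n → F),
    u = ∑ i, lam i • ((⨂ₜ[ℝ] j, x i j) ⊗ₜ[ℝ] y i) ∧
    c = dualLpNorm p lam * weakAbsTensorNorm q x * weakAbsLatticeNorm r y}

/-- The functional `x₁ ⊗ ⋯ ⊗ x_m ⊗ y ↦ (∏ⱼ fⱼ(xⱼ)) · g(y)` on the algebraic tensor
product. -/
noncomputable def evalTensor (f : ∀ j, E j →L[ℝ] ℝ) (g : F →L[ℝ] ℝ) :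
    ((⨂[ℝ] j, E j) ⊗[ℝ] F) →ₗ[ℝ] ℝ :=
  (TensorProduct.lid ℝ ℝ).toLinearMap ∘ₗ
    TensorProduct.map
      (PiTensorProduct.lift
        ((MultilinearMap.mkPiAlgebra ℝ (Fin m) ℝ).compLinearMap fun j => (f j : E j →ₗ[ℝ] ℝ)))
      (g : F →ₗ[ℝ] ℝ)

/-- The injective tensor norm on `E₁ ⊗ ⋯ ⊗ E_m ⊗ F`. -/
noncomputable def injNorm (u : (⨂[ℝ] j, E j) ⊗[ℝ] F) : ℝ :=
  ⨆ fg : {fg : (∀ j, E j →L[ℝ] ℝ) × (F →L[ℝ] ℝ) // (∀ j, ‖fg.1 j‖ ≤ 1) ∧ ‖fg.2‖ ≤ 1},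
    |evalTensor fg.1.1 fg.1.2 u|

/-- The projective tensor norm on `E₁ ⊗ ⋯ ⊗ E_m ⊗ F`. -/
noncomputable def projNorm (u : (⨂[ℝ] j, E j) ⊗[ℝ] F) : ℝ :=
  sInf {c : ℝ | ∃ (n : ℕ) (lam : Fin n → ℝ) (x : Fin n → ∀ j, E j) (y : Fin n → F),
    u = ∑ i, lam i • ((⨂ₜ[ℝ] j, x i j) ⊗ₜ[ℝ] y i) ∧
    c = ∑ i, |lam i| * (∏ j, ‖x i j‖) * ‖y i‖}

open scoped Pointwise

theorem Set.Icc_neg_add_eq_Icc_add_Icc {α : Type*} [Lattice α] [AddCommGroup α]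
    [IsOrderedAddMonoid α] {x y : α} (hx : 0 ≤ x) (hy : 0 ≤ y) :
    Set.Icc (-(x + y)) (x + y) = Set.Icc (-x) x + Set.Icc (-y) y := by
  refine subset_antisymm (fun z hz => ?_) ?_
  · -- clamp `z` to `[-x, x]`; what is left over lies in `[-y, y]`
    refine ⟨(z ⊓ x) ⊔ -x, ⟨le_sup_right, sup_le inf_le_right (neg_le_self hx)⟩,
      z - (z ⊓ x) ⊔ -x, ⟨?_, ?_⟩, add_sub_cancel _ _⟩
    · rw [sub_sup, sub_inf, sub_self, sub_neg_eq_add]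
      refine le_inf (le_sup_of_le_left (neg_nonpos.2 hy)) ?_
      rw [neg_le_iff_add_nonneg, add_assoc, ← neg_le_iff_add_nonneg]
      exact hz.1
    · rw [sub_sup, sub_inf, sub_self]
      exact inf_le_of_left_le (sup_le hy (sub_le_iff_le_add'.2 hz.2))
  · rintro _ ⟨a, ⟨ha₁, ha₂⟩, b, ⟨hb₁, hb₂⟩, rfl⟩
    exact ⟨neg_add x y ▸ add_le_add ha₁ hb₁, add_le_add ha₂ hb₂⟩

theorem norm_le_of_mem_Icc_neg {G : Type*} [NormedAddCommGroup G] [Lattice G]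
    [IsOrderedAddMonoid G] [HasSolidNorm G] {x z : G} (hz : z ∈ Set.Icc (-x) x) : ‖z‖ ≤ ‖x‖ :=
  norm_le_norm_of_abs_le_abs ((abs_le'.2 ⟨hz.2, neg_le.1 hz.1⟩).trans (le_abs_self x))

theorem norm_mul_inv_norm_smul_le {V : Type*} [NormedAddCommGroup V] [NormedSpace ℝ V] (c : ℝ)
    (v : V) : ‖(c * ‖v‖⁻¹) • v‖ ≤ |c| := by
  rw [norm_smul, norm_mul, Real.norm_eq_abs, norm_inv, norm_norm, mul_assoc]
  exact mul_le_of_le_one_right (abs_nonneg c) inv_mul_le_one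

theorem prod_norm_mulSingle_mul_inv_norm_smul_le {ι : Type*} [Fintype ι] [DecidableEq ι]
    {V : ι → Type*} [∀ i, NormedAddCommGroup (V i)] [∀ i, NormedSpace ℝ (V i)] (i₀ : ι) (b : ℝ)
    (v : ∀ i, V i) : ∏ i, ‖((Pi.mulSingle i₀ b : ι → ℝ) i * ‖v i‖⁻¹) • v i‖ ≤ |b| := by
  calc ∏ i, ‖((Pi.mulSingle i₀ b : ι → ℝ) i * ‖v i‖⁻¹) • v i‖
      ≤ ∏ i, |(Pi.mulSingle i₀ b : ι → ℝ) i| :=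
        Finset.prod_le_prod (fun _ _ => norm_nonneg _) fun _ _ => norm_mul_inv_norm_smul_le _ _
    _ = |b| := by rw [← Finset.abs_prod, Fintype.prod_pi_mulSingle']

theorem Real.Lr_le_Lp_mul_Lq {ι : Type*} (s : Finset ι) (f g : ι → ℝ) {p q r : ℝ}
    (hpqr : p.HolderTriple q r) :
    (∑ i ∈ s, |f i * g i| ^ r) ^ (1 / r) ≤
      (∑ i ∈ s, |f i| ^ p) ^ (1 / p) * (∑ i ∈ s, |g i| ^ q) ^ (1 / q) := by
  simpa using! NNReal.coe_le_coe.2 <| NNReal.Lr_le_Lp_mul_Lq s (fun i ↦ ⟨_, abs_nonneg (f i)⟩)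
    (fun i ↦ ⟨_, abs_nonneg (g i)⟩) hpqr

theorem exists_eq_sum_smul_tprod_tmul {R ι : Type*} [CommSemiring R] {M : ι → Type*}
    [∀ i, AddCommMonoid (M i)] [∀ i, Module R (M i)] {N : Type*} [AddCommMonoid N] [Module R N]
    (u : (⨂[R] i, M i) ⊗[R] N) :
    ∃ (n : ℕ) (lam : Fin n → R) (x : Fin n → ∀ i, M i) (y : Fin n → N),
      u = ∑ k, lam k • ((⨂ₜ[R] i, x k i) ⊗ₜ[R] y k) := by
  have hu : u ∈ Submodule.map₂ (TensorProduct.mk R _ N)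
      (Submodule.span R (Set.range (tprod R (s := M)))) (Submodule.span R Set.univ) := by
    rw [PiTensorProduct.span_tprod_eq_top, Submodule.span_univ,
      TensorProduct.map₂_mk_top_top_eq_top]
    trivial
  rw [Submodule.map₂_span_span] at hu
  obtain ⟨n, lam, v, rfl⟩ := Submodule.mem_span_set'.1 hu
  choose t ht y _ hty using fun k => (v k).2
  choose x hx using ht
  exact ⟨n, lam, x, y, Finset.sum_congr rfl fun k _ => by rw [← hty, ← hx]; rfl⟩

namespace ContinuousLinearMap

variable {G : Type*} [NormedAddCommGroup G] [Lattice G] [NormedSpace ℝ G] (f : G →L[ℝ] ℝ)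

/-- The Riesz–Kantorovich formula `|f| x = sup {f z : -x ≤ z ≤ x}` for the modulus of `f`,
meaningful for `0 ≤ x`. -/
noncomputable def supIcc (x : G) : ℝ :=
  sSup (f '' Set.Icc (-x) x)

@[simp]
theorem supIcc_zero : f.supIcc 0 = 0 := by
  simp [supIcc]

variable [IsOrderedAddMonoid G] [HasSolidNorm G]

theorem apply_le_of_mem_Icc_neg {x z : G} (hz : z ∈ Set.Icc (-x) x) : f z ≤ ‖f‖ * ‖x‖ :=
  (le_abs_self _).trans
    ((f.le_opNorm z).trans (mul_le_mul_of_nonneg_left (norm_le_of_mem_Icc_neg hz) (norm_nonneg f)))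

theorem bddAbove_image_Icc_neg (x : G) : BddAbove (f '' Set.Icc (-x) x) :=
  ⟨‖f‖ * ‖x‖, Set.forall_mem_image.2 fun _ => f.apply_le_of_mem_Icc_neg⟩

theorem le_supIcc {x z : G} (hz : z ∈ Set.Icc (-x) x) : f z ≤ f.supIcc x :=
  le_csSup (f.bddAbove_image_Icc_neg x) ⟨z, hz, rfl⟩

theorem supIcc_nonneg {x : G} (hx : 0 ≤ x) : 0 ≤ f.supIcc x := by
  simpa using f.le_supIcc ⟨neg_nonpos.2 hx, hx⟩

theorem supIcc_le {x : G} (hx : 0 ≤ x) : f.supIcc x ≤ ‖f‖ * ‖x‖ :=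
  csSup_le ((Set.nonempty_Icc.2 (neg_le_self hx)).image f)
    (Set.forall_mem_image.2 fun _ => f.apply_le_of_mem_Icc_neg)

theorem supIcc_add {x y : G} (hx : 0 ≤ x) (hy : 0 ≤ y) :
    f.supIcc (x + y) = f.supIcc x + f.supIcc y := by
  rw [supIcc, Set.Icc_neg_add_eq_Icc_add_Icc hx hy, Set.image_add,
    csSup_add ((Set.nonempty_Icc.2 (neg_le_self hx)).image f) (f.bddAbove_image_Icc_neg x)
      ((Set.nonempty_Icc.2 (neg_le_self hy)).image f) (f.bddAbove_image_Icc_neg y),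
    supIcc, supIcc]

theorem supIcc_posPart_sub_supIcc_negPart {x a b : G} (ha : 0 ≤ a) (hb : 0 ≤ b)
    (h : x = a - b) : f.supIcc x⁺ - f.supIcc x⁻ = f.supIcc a - f.supIcc b := by
  have hsplit : x⁺ + b = a + x⁻ := by
    rw [← sub_eq_sub_iff_add_eq_add, posPart_sub_negPart, h]
  have := congrArg f.supIcc hsplit
  rw [f.supIcc_add (posPart_nonneg x) hb, f.supIcc_add ha (negPart_nonneg x)] at this
  linarith

noncomputable def modulusAddHom : G →+ ℝ where
  toFun x := f.supIcc x⁺ - f.supIcc x⁻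
  map_zero' := by simp
  map_add' x y := by
    have hxy : x + y = (x⁺ + y⁺) - (x⁻ + y⁻) := by
      conv_lhs => rw [← posPart_sub_negPart x, ← posPart_sub_negPart y]
      abel
    rw [f.supIcc_posPart_sub_supIcc_negPart (add_nonneg (posPart_nonneg x) (posPart_nonneg y))
      (add_nonneg (negPart_nonneg x) (negPart_nonneg y)) hxy,
      f.supIcc_add (posPart_nonneg x) (posPart_nonneg y),
      f.supIcc_add (negPart_nonneg x) (negPart_nonneg y)]
    ring

theorem abs_modulusAddHom_le (x : G) : |f.modulusAddHom x| ≤ f.supIcc |x| := by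
  have hpos := f.supIcc_nonneg (posPart_nonneg x)
  have hneg := f.supIcc_nonneg (negPart_nonneg x)
  rw [← posPart_add_negPart x, f.supIcc_add (posPart_nonneg x) (negPart_nonneg x)]
  exact abs_sub_le_iff.2 ⟨by linarith, by linarith⟩

theorem norm_modulusAddHom_le (x : G) : ‖f.modulusAddHom x‖ ≤ ‖f‖ * ‖x‖ := by
  simpa [norm_abs_eq_norm] using (f.abs_modulusAddHom_le x).trans (f.supIcc_le (abs_nonneg x))

noncomputable def modulus : G →L[ℝ] ℝ :=
  f.modulusAddHom.toRealLinearMap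
    (AddMonoidHomClass.continuous_of_bound _ ‖f‖ f.norm_modulusAddHom_le)

theorem modulus_apply_of_nonneg {x : G} (hx : 0 ≤ x) : f.modulus x = f.supIcc x := by
  change f.supIcc x⁺ - f.supIcc x⁻ = _
  rw [posPart_of_nonneg hx, negPart_of_nonneg hx, supIcc_zero, sub_zero]

theorem modulus_nonneg {x : G} (hx : 0 ≤ x) : 0 ≤ f.modulus x :=
  f.modulus_apply_of_nonneg hx ▸ f.supIcc_nonneg hx

theorem norm_modulus_le : ‖f.modulus‖ ≤ ‖f‖ :=
  opNorm_le_bound _ (norm_nonneg f) f.norm_modulusAddHom_le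

theorem abs_apply_le_modulus_abs (z : G) : |f z| ≤ f.modulus |z| := by
  rw [f.modulus_apply_of_nonneg (abs_nonneg z), abs_le', ← map_neg]
  exact ⟨f.le_supIcc ⟨neg_le.1 (neg_le_abs z), le_abs_self z⟩,
    f.le_supIcc ⟨neg_le_neg (le_abs_self z), neg_le_abs z⟩⟩

end ContinuousLinearMap

section DualLpNorm

variable {p : ℝ} {n : ℕ}

theorem abs_le_one_of_lpNorm_le_one (hp : 0 < p) {t : Fin n → ℝ}
    (ht : (∑ i, |t i| ^ p) ^ (1 / p) ≤ 1) (i : Fin n) : |t i| ≤ 1 := by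
  refine le_trans ?_ ht
  rw [one_div, ← Real.rpow_rpow_inv (abs_nonneg (t i)) hp.ne']
  exact Real.rpow_le_rpow (Real.rpow_nonneg (abs_nonneg _) _)
    (Finset.single_le_sum (fun j _ => Real.rpow_nonneg (abs_nonneg (t j)) p) (Finset.mem_univ i))
    (inv_nonneg.2 hp.le)

theorem dualLpNorm_nonneg (lam : Fin n → ℝ) : 0 ≤ dualLpNorm p lam :=
  Real.iSup_nonneg fun _ => abs_nonneg _

theorem le_dualLpNorm (hp : 0 < p) (lam : Fin n → ℝ) {t : Fin n → ℝ}
    (ht : (∑ i, |t i| ^ p) ^ (1 / p) ≤ 1) : |∑ i, t i * lam i| ≤ dualLpNorm p lam := by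
  refine le_ciSup (f := fun t : {t : Fin n → ℝ // (∑ i, |t i| ^ p) ^ (1 / p) ≤ 1} =>
    |∑ i, t.1 i * lam i|) ⟨∑ i, |lam i|, ?_⟩ ⟨t, ht⟩
  rintro _ ⟨⟨s, hs⟩, rfl⟩
  refine (Finset.abs_sum_le_sum_abs _ _).trans (Finset.sum_le_sum fun i _ => ?_)
  rw [abs_mul]
  exact mul_le_of_le_one_left (abs_nonneg _) (abs_le_one_of_lpNorm_le_one hp hs i)

theorem abs_sum_mul_le_dualLpNorm_mul (hp : 0 < p) (lam s : Fin n → ℝ) :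
    |∑ i, lam i * s i| ≤ dualLpNorm p lam * (∑ i, |s i| ^ p) ^ (1 / p) := by
  set S := ∑ i, |s i| ^ p
  have hS : 0 ≤ S := Finset.sum_nonneg fun i _ => Real.rpow_nonneg (abs_nonneg _) _
  rcases hS.eq_or_lt with hS0 | hSpos
  · have hs : ∀ i, s i = 0 := fun i => by
      have := (Finset.sum_eq_zero_iff_of_nonneg fun j _ => Real.rpow_nonneg (abs_nonneg (s j)) p).1
        hS0.symm i (Finset.mem_univ i)
      simpa [Real.rpow_eq_zero (abs_nonneg _) hp.ne'] using this
    simpa [hs] using mul_nonneg (dualLpNorm_nonneg lam) (Real.rpow_nonneg hS (1 / p))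
  · set N := S ^ (1 / p)
    have hN : 0 < N := Real.rpow_pos_of_pos hSpos _
    have hNp : N ^ p = S := by rw [← Real.rpow_mul hS, one_div_mul_cancel hp.ne', Real.rpow_one]
    have ht : (∑ i, |s i / N| ^ p) ^ (1 / p) ≤ 1 := by
      have hsum : ∑ i, |s i / N| ^ p = 1 := by
        simp only [abs_div, abs_of_pos hN, Real.div_rpow (abs_nonneg _) hN.le]
        rw [← Finset.sum_div, hNp, div_self hSpos.ne']
      rw [hsum, Real.one_rpow]
    have hsum : ∑ i, s i / N * lam i = (∑ i, lam i * s i) / N := by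
      rw [Finset.sum_div]
      exact Finset.sum_congr rfl fun i _ => by ring
    have := le_dualLpNorm hp lam ht
    rwa [hsum, abs_div, abs_of_pos hN, div_le_iff₀ hN] at this

theorem abs_sum_mul_mul_le_dualLpNorm_mul {q r : ℝ} (hqrp : q.HolderTriple r p)
    (lam c d : Fin n → ℝ) :
    |∑ i, lam i * (c i * d i)| ≤
      dualLpNorm p lam * ((∑ i, |c i| ^ q) ^ (1 / q) * (∑ i, |d i| ^ r) ^ (1 / r)) :=
  (abs_sum_mul_le_dualLpNorm_mul hqrp.pos' lam _).trans (mul_le_mul_of_nonneg_left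
    (Real.Lr_le_Lp_mul_Lq _ c d hqrp) (dualLpNorm_nonneg lam))

/-- `a i * a i ^ (-p⁻¹)` is `a i ^ (1 - p⁻¹)`, except that it vanishes at `a i = 0` even when
`p = 1`. -/
theorem dualLpNorm_le_of_abs_le (hp : 1 ≤ p) {lam a : Fin n → ℝ} (ha : ∀ i, 0 ≤ a i)
    (hlam : ∀ i, |lam i| ≤ a i * a i ^ (-p⁻¹)) : dualLpNorm p lam ≤ (∑ i, a i) ^ (1 - p⁻¹) := by
  have hp0 : 0 < p := zero_lt_one.trans_le hp
  refine Real.iSup_le (fun ⟨t, ht⟩ => ?_) (Real.rpow_nonneg (Finset.sum_nonneg fun i _ => ha i) _)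
  set f : Fin n → ℝ := fun i => |t i| * a i ^ (-p⁻¹)
  have hf : ∀ i, 0 ≤ f i := fun i => mul_nonneg (abs_nonneg _) (Real.rpow_nonneg (ha i) _)
  have ht' : ∑ i, |t i| ^ p ≤ 1 := by
    have hS : 0 ≤ ∑ i, |t i| ^ p := Finset.sum_nonneg fun i _ => Real.rpow_nonneg (abs_nonneg _) _
    simpa [← Real.rpow_mul hS, hp0.ne'] using Real.rpow_le_one (Real.rpow_nonneg hS _) ht hp0.le
  have hfp : ∑ i, a i * f i ^ p ≤ 1 := by
    refine le_trans (Finset.sum_le_sum fun i _ => ?_) ht'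
    rw [Real.mul_rpow (abs_nonneg _) (Real.rpow_nonneg (ha i) _), ← Real.rpow_mul (ha i), neg_mul,
      inv_mul_cancel₀ hp0.ne', Real.rpow_neg_one, mul_left_comm]
    exact mul_le_of_le_one_right (Real.rpow_nonneg (abs_nonneg _) _) mul_inv_le_one
  calc |∑ i, t i * lam i| ≤ ∑ i, a i * f i := by
        refine (Finset.abs_sum_le_sum_abs _ _).trans (Finset.sum_le_sum fun i _ => ?_)
        rw [abs_mul, mul_left_comm]
        exact mul_le_mul_of_nonneg_left (hlam i) (abs_nonneg _)
    _ ≤ (∑ i, a i) ^ (1 - p⁻¹) * (∑ i, a i * f i ^ p) ^ p⁻¹ :=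
        Real.inner_le_weight_mul_Lp_of_nonneg _ hp _ _ ha hf
    _ ≤ (∑ i, a i) ^ (1 - p⁻¹) := by
        refine mul_le_of_le_one_right (Real.rpow_nonneg (Finset.sum_nonneg fun i _ => ha i) _)
          (Real.rpow_le_one (Finset.sum_nonneg fun i _ => mul_nonneg (ha i)
            (Real.rpow_nonneg (hf i) _)) hfp (inv_nonneg.2 hp0.le))

end DualLpNorm

section WeakNorms

variable {n : ℕ} {q r : ℝ}

omit [∀ i, HasSolidNorm (E i)] in
theorem weakAbsTensorNorm_nonneg (x : Fin n → ∀ j, E j) : 0 ≤ weakAbsTensorNorm q x :=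
  Real.iSup_nonneg fun φ => Real.rpow_nonneg
    (Finset.sum_nonneg fun _ _ => Real.rpow_nonneg (φ.2.2 _ fun _ => abs_nonneg _) _) _

theorem lpNorm_apply_abs_le_of_prod_norm_le (hq : 0 < q) {x : Fin n → ∀ j, E j}
    {b : Fin n → ℝ} (hb : ∀ i, ∏ j, ‖x i j‖ ≤ b i) {φ : ContinuousMultilinearMap ℝ E ℝ}
    (hφ : ‖φ‖ ≤ 1) (hφpos : IsPosForm φ) :
    (∑ i, (φ fun j => |x i j|) ^ q) ^ (1 / q) ≤ (∑ i, b i ^ q) ^ (1 / q) := by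
  refine Real.rpow_le_rpow
    (Finset.sum_nonneg fun i _ => Real.rpow_nonneg (hφpos _ fun _ => abs_nonneg _) _)
    (Finset.sum_le_sum fun i _ => Real.rpow_le_rpow (hφpos _ fun _ => abs_nonneg _) ?_ hq.le)
    (one_div_nonneg.2 hq.le)
  calc φ (fun j => |x i j|) ≤ ‖φ‖ * ∏ j, ‖|x i j|‖ := (le_abs_self _).trans (φ.le_opNorm _)
    _ ≤ ∏ j, ‖x i j‖ := by
        simp only [norm_abs_eq_norm]
        exact mul_le_of_le_one_left (Finset.prod_nonneg fun _ _ => norm_nonneg _) hφ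
    _ ≤ b i := hb i

theorem weakAbsTensorNorm_le (hq : 0 < q) {x : Fin n → ∀ j, E j} {b : Fin n → ℝ}
    (hb : ∀ i, ∏ j, ‖x i j‖ ≤ b i) : weakAbsTensorNorm q x ≤ (∑ i, b i ^ q) ^ (1 / q) :=
  Real.iSup_le (fun φ => lpNorm_apply_abs_le_of_prod_norm_le hq hb φ.2.1 φ.2.2)
    (Real.rpow_nonneg (Finset.sum_nonneg fun i _ => Real.rpow_nonneg
      ((Finset.prod_nonneg fun _ _ => norm_nonneg _).trans (hb i)) _) _)

theorem le_weakAbsTensorNorm (hq : 0 < q) {x : Fin n → ∀ j, E j} {s : Fin n → ℝ}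
    {φ : ContinuousMultilinearMap ℝ E ℝ} (hφ : ‖φ‖ ≤ 1) (hφpos : IsPosForm φ)
    (hs : ∀ i, |s i| ≤ φ fun j => |x i j|) :
    (∑ i, |s i| ^ q) ^ (1 / q) ≤ weakAbsTensorNorm q x := by
  refine le_trans ?_ (le_ciSup (f := fun φ : {φ : ContinuousMultilinearMap ℝ E ℝ //
      ‖φ‖ ≤ 1 ∧ IsPosForm φ} => (∑ i, (φ.1 fun j => |x i j|) ^ q) ^ (1 / q))
    ⟨_, Set.forall_mem_range.2 fun φ =>
      lpNorm_apply_abs_le_of_prod_norm_le hq (fun _ => le_rfl) φ.2.1 φ.2.2⟩ ⟨φ, hφ, hφpos⟩)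
  exact Real.rpow_le_rpow (Finset.sum_nonneg fun i _ => Real.rpow_nonneg (abs_nonneg _) _)
    (Finset.sum_le_sum fun i _ => Real.rpow_le_rpow (abs_nonneg _) (hs i) hq.le)
    (one_div_nonneg.2 hq.le)

omit [HasSolidNorm F] in
theorem weakAbsLatticeNorm_nonneg (y : Fin n → F) : 0 ≤ weakAbsLatticeNorm r y :=
  Real.iSup_nonneg fun g => Real.rpow_nonneg
    (Finset.sum_nonneg fun _ _ => Real.rpow_nonneg (g.2.2 _ (abs_nonneg _)) _) _

theorem lpNorm_apply_abs_le_of_norm_le (hr : 0 < r) {y : Fin n → F} {b : Fin n → ℝ}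
    (hb : ∀ i, ‖y i‖ ≤ b i) {g : F →L[ℝ] ℝ} (hg : ‖g‖ ≤ 1) (hgpos : ∀ z : F, 0 ≤ z → 0 ≤ g z) :
    (∑ i, (g |y i|) ^ r) ^ (1 / r) ≤ (∑ i, b i ^ r) ^ (1 / r) := by
  refine Real.rpow_le_rpow
    (Finset.sum_nonneg fun i _ => Real.rpow_nonneg (hgpos _ (abs_nonneg _)) _)
    (Finset.sum_le_sum fun i _ => Real.rpow_le_rpow (hgpos _ (abs_nonneg _)) ?_ hr.le)
    (one_div_nonneg.2 hr.le)
  calc g |y i| ≤ ‖g‖ * ‖|y i|‖ := (le_abs_self _).trans (g.le_opNorm _)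
    _ ≤ ‖y i‖ := by
        rw [norm_abs_eq_norm]
        exact mul_le_of_le_one_left (norm_nonneg _) hg
    _ ≤ b i := hb i

theorem weakAbsLatticeNorm_le (hr : 0 < r) {y : Fin n → F} {b : Fin n → ℝ}
    (hb : ∀ i, ‖y i‖ ≤ b i) : weakAbsLatticeNorm r y ≤ (∑ i, b i ^ r) ^ (1 / r) :=
  Real.iSup_le (fun g => lpNorm_apply_abs_le_of_norm_le hr hb g.2.1 g.2.2)
    (Real.rpow_nonneg (Finset.sum_nonneg fun i _ =>
      Real.rpow_nonneg ((norm_nonneg _).trans (hb i)) _) _)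

theorem le_weakAbsLatticeNorm (hr : 0 < r) {y : Fin n → F} {s : Fin n → ℝ} {g : F →L[ℝ] ℝ}
    (hg : ‖g‖ ≤ 1) (hgpos : ∀ z : F, 0 ≤ z → 0 ≤ g z) (hs : ∀ i, |s i| ≤ g |y i|) :
    (∑ i, |s i| ^ r) ^ (1 / r) ≤ weakAbsLatticeNorm r y := by
  refine le_trans ?_ (le_ciSup (f := fun g : {g : F →L[ℝ] ℝ //
      ‖g‖ ≤ 1 ∧ ∀ z : F, 0 ≤ z → 0 ≤ g z} => (∑ i, (g.1 |y i|) ^ r) ^ (1 / r))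
    ⟨_, Set.forall_mem_range.2 fun g =>
      lpNorm_apply_abs_le_of_norm_le hr (fun _ => le_rfl) g.2.1 g.2.2⟩ ⟨g, hg, hgpos⟩)
  exact Real.rpow_le_rpow (Finset.sum_nonneg fun i _ => Real.rpow_nonneg (abs_nonneg _) _)
    (Finset.sum_le_sum fun i _ => Real.rpow_le_rpow (abs_nonneg _) (hs i) hr.le)
    (one_div_nonneg.2 hr.le)

theorem lpNorm_prod_apply_le_weakAbsTensorNorm (hq : 0 < q) (x : Fin n → ∀ j, E j)
    {f : ∀ j, E j →L[ℝ] ℝ} (hf : ∀ j, ‖f j‖ ≤ 1) :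
    (∑ i, |∏ j, f j (x i j)| ^ q) ^ (1 / q) ≤ weakAbsTensorNorm q x := by
  set φ := (ContinuousMultilinearMap.mkPiAlgebra ℝ (Fin m) ℝ).compContinuousLinearMap
    fun j => (f j).modulus
  have hφ : ∀ z, φ z = ∏ j, (f j).modulus (z j) := fun z => by simp [φ]
  refine le_weakAbsTensorNorm hq (φ := φ) ?_ (fun z hz => ?_) (fun i => ?_)
  · refine (ContinuousMultilinearMap.norm_compContinuousLinearMap_le _ _).trans ?_
    rw [ContinuousMultilinearMap.norm_mkPiAlgebra, one_mul]
    exact Finset.prod_le_one (fun _ _ => norm_nonneg _)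
      fun j _ => (f j).norm_modulus_le.trans (hf j)
  · exact (hφ z).symm ▸ Finset.prod_nonneg fun j _ => (f j).modulus_nonneg (hz j)
  · rw [hφ, Finset.abs_prod]
    exact Finset.prod_le_prod (fun _ _ => abs_nonneg _)
      fun j _ => (f j).abs_apply_le_modulus_abs (x i j)

theorem lpNorm_apply_le_weakAbsLatticeNorm (hr : 0 < r) (y : Fin n → F) {g : F →L[ℝ] ℝ}
    (hg : ‖g‖ ≤ 1) : (∑ i, |g (y i)| ^ r) ^ (1 / r) ≤ weakAbsLatticeNorm r y :=
  le_weakAbsLatticeNorm hr (g.norm_modulus_le.trans hg) (fun _ => g.modulus_nonneg)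
    fun i => g.abs_apply_le_modulus_abs (y i)

end WeakNorms

section TensorNorms

variable {p q r : ℝ} {u : (⨂[ℝ] j, E j) ⊗[ℝ] F} {n : ℕ} {lam : Fin n → ℝ}
  {x : Fin n → ∀ j, E j} {y : Fin n → F}

omit [∀ i, Lattice (E i)] [∀ i, IsOrderedAddMonoid (E i)] [∀ i, HasSolidNorm (E i)] [Lattice F]
  [IsOrderedAddMonoid F] [HasSolidNorm F] in
theorem evalTensor_tprod_tmul (f : ∀ j, E j →L[ℝ] ℝ) (g : F →L[ℝ] ℝ) (x : ∀ j, E j) (y : F) :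
    evalTensor f g ((⨂ₜ[ℝ] j, x j) ⊗ₜ[ℝ] y) = (∏ j, f j (x j)) * g y := by
  simp [evalTensor]

theorem injNorm_le_of_eq_sum (hqrp : q.HolderTriple r p)
    (hu : u = ∑ i, lam i • ((⨂ₜ[ℝ] j, x i j) ⊗ₜ[ℝ] y i)) :
    injNorm u ≤ dualLpNorm p lam * weakAbsTensorNorm q x * weakAbsLatticeNorm r y := by
  refine Real.iSup_le (fun ⟨⟨f, g⟩, hf, hg⟩ => ?_) (mul_nonneg (mul_nonneg
    (dualLpNorm_nonneg lam) (weakAbsTensorNorm_nonneg x)) (weakAbsLatticeNorm_nonneg y))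
  calc |evalTensor f g u| = |∑ i, lam i * ((∏ j, f j (x i j)) * g (y i))| := by
        simp [hu, evalTensor_tprod_tmul]
    _ ≤ dualLpNorm p lam * ((∑ i, |∏ j, f j (x i j)| ^ q) ^ (1 / q) *
          (∑ i, |g (y i)| ^ r) ^ (1 / r)) :=
        abs_sum_mul_mul_le_dualLpNorm_mul hqrp _ _ _
    _ ≤ dualLpNorm p lam * (weakAbsTensorNorm q x * weakAbsLatticeNorm r y) :=
        mul_le_mul_of_nonneg_left (mul_le_mul (lpNorm_prod_apply_le_weakAbsTensorNorm hqrp.pos x hf)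
          (lpNorm_apply_le_weakAbsLatticeNorm hqrp.symm.pos y hg)
          (Real.rpow_nonneg (Finset.sum_nonneg fun _ _ => Real.rpow_nonneg (abs_nonneg _) _) _)
          (weakAbsTensorNorm_nonneg x)) (dualLpNorm_nonneg lam)
    _ = _ := (mul_assoc _ _ _).symm

omit [∀ i, HasSolidNorm (E i)] [HasSolidNorm F] in
theorem muPlus_le_of_eq_sum (hu : u = ∑ i, lam i • ((⨂ₜ[ℝ] j, x i j) ⊗ₜ[ℝ] y i)) :
    muPlus p q r u ≤ dualLpNorm p lam * weakAbsTensorNorm q x * weakAbsLatticeNorm r y :=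
  csInf_le ⟨0, by
    rintro _ ⟨n, lam, x, y, -, rfl⟩
    exact mul_nonneg (mul_nonneg (dualLpNorm_nonneg lam) (weakAbsTensorNorm_nonneg x))
      (weakAbsLatticeNorm_nonneg y)⟩ ⟨n, lam, x, y, hu, rfl⟩

omit [∀ i, IsOrderedAddMonoid (E i)] [∀ i, HasSolidNorm (E i)] [IsOrderedAddMonoid F]
  [HasSolidNorm F] in
theorem le_muPlus {c : ℝ} (h : ∀ (n : ℕ) (lam : Fin n → ℝ) (x : Fin n → ∀ j, E j) (y : Fin n → F),
      u = ∑ i, lam i • ((⨂ₜ[ℝ] j, x i j) ⊗ₜ[ℝ] y i) →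
      c ≤ dualLpNorm p lam * weakAbsTensorNorm q x * weakAbsLatticeNorm r y) :
    c ≤ muPlus p q r u := by
  obtain ⟨n, lam, x, y, hu⟩ := exists_eq_sum_smul_tprod_tmul u
  refine le_csInf ⟨_, n, lam, x, y, hu, rfl⟩ ?_
  rintro _ ⟨n, lam, x, y, hu, rfl⟩
  exact h n lam x y hu

omit [∀ i, Lattice (E i)] [∀ i, IsOrderedAddMonoid (E i)] [∀ i, HasSolidNorm (E i)] [Lattice F]
  [IsOrderedAddMonoid F] [HasSolidNorm F] in
theorem le_projNorm {c : ℝ} (h : ∀ (n : ℕ) (lam : Fin n → ℝ) (x : Fin n → ∀ j, E j) (y : Fin n → F),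
      u = ∑ i, lam i • ((⨂ₜ[ℝ] j, x i j) ⊗ₜ[ℝ] y i) →
      c ≤ ∑ i, |lam i| * (∏ j, ‖x i j‖) * ‖y i‖) :
    c ≤ projNorm u := by
  obtain ⟨n, lam, x, y, hu⟩ := exists_eq_sum_smul_tprod_tmul u
  refine le_csInf ⟨_, n, lam, x, y, hu, rfl⟩ ?_
  rintro _ ⟨n, lam, x, y, hu, rfl⟩
  exact h n lam x y hu

theorem muPlus_tprod_tmul_le (hp : 0 < p) (hq : 0 < q) (hr : 0 < r) (x : ∀ j, E j) (y : F) :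
    muPlus p q r ((⨂ₜ[ℝ] j, x j) ⊗ₜ[ℝ] y) ≤ (∏ j, ‖x j‖) * ‖y‖ := by
  have hlam : dualLpNorm p (fun _ : Fin 1 => (1 : ℝ)) ≤ 1 :=
    Real.iSup_le (fun t => by simpa using abs_le_one_of_lpNorm_le_one hp t.2 0) zero_le_one
  have hx : weakAbsTensorNorm q (fun _ : Fin 1 => x) ≤ ∏ j, ‖x j‖ := by
    refine (weakAbsTensorNorm_le hq (x := fun _ : Fin 1 => x) (fun _ => le_rfl)).trans_eq ?_
    rw [Fin.sum_univ_one, one_div,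
      Real.rpow_rpow_inv (Finset.prod_nonneg fun _ _ => norm_nonneg _) hq.ne']
  have hy : weakAbsLatticeNorm r (fun _ : Fin 1 => y) ≤ ‖y‖ := by
    refine (weakAbsLatticeNorm_le hr (y := fun _ : Fin 1 => y) (fun _ => le_rfl)).trans_eq ?_
    rw [Fin.sum_univ_one, one_div, Real.rpow_rpow_inv (norm_nonneg y) hr.ne']
  calc muPlus p q r ((⨂ₜ[ℝ] j, x j) ⊗ₜ[ℝ] y)
      ≤ dualLpNorm p (fun _ : Fin 1 => (1 : ℝ)) * weakAbsTensorNorm q (fun _ : Fin 1 => x) *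
          weakAbsLatticeNorm r (fun _ : Fin 1 => y) := muPlus_le_of_eq_sum (by simp)
    _ ≤ 1 * (∏ j, ‖x j‖) * ‖y‖ :=
        mul_le_mul (mul_le_mul hlam hx (weakAbsTensorNorm_nonneg _) zero_le_one) hy
          (weakAbsLatticeNorm_nonneg _) (mul_nonneg zero_le_one
            (Finset.prod_nonneg fun _ _ => norm_nonneg _))
    _ = (∏ j, ‖x j‖) * ‖y‖ := by rw [one_mul]

theorem muPlus_le_sum_of_isEmpty [IsEmpty (Fin m)] (hp : 0 < p) (hq : 0 < q) (hr : 0 < r)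
    (hu : u = ∑ i, lam i • ((⨂ₜ[ℝ] j, x i j) ⊗ₜ[ℝ] y i)) :
    muPlus p q r u ≤ ∑ i, |lam i| * (∏ j, ‖x i j‖) * ‖y i‖ := by
  have hu' : u = (⨂ₜ[ℝ] j, (isEmptyElim j : E j)) ⊗ₜ[ℝ] ∑ i, lam i • y i := by
    rw [hu, TensorProduct.tmul_sum]
    exact Finset.sum_congr rfl fun i _ => by
      rw [TensorProduct.tmul_smul, Subsingleton.elim (x i) fun j => isEmptyElim j]
  calc muPlus p q r u ≤ (∏ j, ‖(isEmptyElim j : E j)‖) * ‖∑ i, lam i • y i‖ :=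
        hu' ▸ muPlus_tprod_tmul_le hp hq hr _ _
    _ ≤ ∑ i, ‖lam i • y i‖ := by simpa using norm_sum_le _ _
    _ = ∑ i, |lam i| * (∏ j, ‖x i j‖) * ‖y i‖ := by simp [norm_smul]

omit [∀ i, Lattice (E i)] [∀ i, IsOrderedAddMonoid (E i)] [∀ i, HasSolidNorm (E i)] [Lattice F]
  [IsOrderedAddMonoid F] [HasSolidNorm F] in
theorem smul_tprod_tmul_eq_rescale (hqrp : q.HolderTriple r p) (j₀ : Fin m) (c : ℝ)
    (x : ∀ j, E j) (y : F) {a : ℝ} (ha : a = |c| * (∏ j, ‖x j‖) * ‖y‖) :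
    c • ((⨂ₜ[ℝ] j, x j) ⊗ₜ[ℝ] y) =
      (c * ((∏ j, ‖x j‖) * ‖y‖) * a ^ (-p⁻¹)) •
        ((⨂ₜ[ℝ] j, ((Pi.mulSingle j₀ (a ^ q⁻¹) : Fin m → ℝ) j * ‖x j‖⁻¹) • x j) ⊗ₜ[ℝ]
          ((a ^ r⁻¹ * ‖y‖⁻¹) • y)) := by
  rw [MultilinearMap.map_smul_univ, Finset.prod_mul_distrib, Fintype.prod_pi_mulSingle',
    Finset.prod_inv_distrib, TensorProduct.smul_tmul_smul, smul_smul]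
  by_cases hT : (⨂ₜ[ℝ] j, x j) ⊗ₜ[ℝ] y = 0
  · simp [hT]
  have hx : ∀ j, x j ≠ 0 := fun j hj => hT (by rw [MultilinearMap.map_coord_zero _ j hj,
    TensorProduct.zero_tmul])
  have hy : y ≠ 0 := fun hy => hT (by rw [hy, TensorProduct.tmul_zero])
  by_cases hc : c = 0
  · simp [hc]
  have hP : ∏ j, ‖x j‖ ≠ 0 := Finset.prod_ne_zero_iff.2 fun j _ => norm_ne_zero_iff.2 (hx j)
  have ha₀ : 0 < a := by rw [ha]; positivity
  have hexp : a ^ (-p⁻¹) * (a ^ q⁻¹ * a ^ r⁻¹) = 1 := by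
    rw [← Real.rpow_add ha₀, ← Real.rpow_add ha₀, hqrp.inv_add_inv_eq_inv, neg_add_cancel,
      Real.rpow_zero]
  congr 1
  calc c = c * ((∏ j, ‖x j‖) * (∏ j, ‖x j‖)⁻¹) * (‖y‖ * ‖y‖⁻¹) *
        (a ^ (-p⁻¹) * (a ^ q⁻¹ * a ^ r⁻¹)) := by
        rw [mul_inv_cancel₀ hP, mul_inv_cancel₀ (norm_ne_zero_iff.2 hy), hexp, mul_one, mul_one,
          mul_one]
    _ = _ := by ring

theorem muPlus_le_sum_of_nonempty (hp : 1 ≤ p) (hqrp : q.HolderTriple r p) (j₀ : Fin m)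
    (hu : u = ∑ i, lam i • ((⨂ₜ[ℝ] j, x i j) ⊗ₜ[ℝ] y i)) :
    muPlus p q r u ≤ ∑ i, |lam i| * (∏ j, ‖x i j‖) * ‖y i‖ := by
  have hq := hqrp.pos
  have hr := hqrp.symm.pos
  set a : Fin n → ℝ := fun i => |lam i| * (∏ j, ‖x i j‖) * ‖y i‖
  have ha : ∀ i, 0 ≤ a i := fun i => by positivity
  set A := ∑ i, a i
  have hA : 0 ≤ A := Finset.sum_nonneg fun i _ => ha i
  have hrep := hu.trans (Finset.sum_congr rfl fun i _ =>
    smul_tprod_tmul_eq_rescale hqrp j₀ (lam i) (x i) (y i) (a := a i) rfl)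
  have hlam := dualLpNorm_le_of_abs_le hp ha
      (lam := fun i => lam i * ((∏ j, ‖x i j‖) * ‖y i‖) * a i ^ (-p⁻¹)) fun i => le_of_eq <| by
    rw [abs_mul, abs_mul, abs_of_nonneg (by positivity : 0 ≤ (∏ j, ‖x i j‖) * ‖y i‖),
      abs_of_nonneg (Real.rpow_nonneg (ha i) _), ← mul_assoc]
  have hx := weakAbsTensorNorm_le hq (x := fun i j =>
      ((Pi.mulSingle j₀ (a i ^ q⁻¹) : Fin m → ℝ) j * ‖x i j‖⁻¹) • x i j)
    (b := fun i => a i ^ q⁻¹) fun i => (prod_norm_mulSingle_mul_inv_norm_smul_le _ _ _).trans_eq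
      (abs_of_nonneg (Real.rpow_nonneg (ha i) _))
  have hy := weakAbsLatticeNorm_le hr (y := fun i => (a i ^ r⁻¹ * ‖y i‖⁻¹) • y i)
    (b := fun i => a i ^ r⁻¹) fun i => (norm_mul_inv_norm_smul_le _ _).trans_eq
      (abs_of_nonneg (Real.rpow_nonneg (ha i) _))
  simp only [Real.rpow_inv_rpow (ha _) hq.ne', Real.rpow_inv_rpow (ha _) hr.ne'] at hx hy
  calc muPlus p q r u ≤ _ := muPlus_le_of_eq_sum hrep
    _ ≤ A ^ (1 - p⁻¹) * A ^ (1 / q) * A ^ (1 / r) :=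
        mul_le_mul (mul_le_mul hlam hx (weakAbsTensorNorm_nonneg _) (Real.rpow_nonneg hA _)) hy
          (weakAbsLatticeNorm_nonneg _) (mul_nonneg (Real.rpow_nonneg hA _) (Real.rpow_nonneg hA _))
    _ = A := by
        rcases hA.eq_or_lt with hA₀ | hA₀
        · rw [← hA₀, Real.zero_rpow (one_div_pos.2 hq).ne', mul_zero, zero_mul]
        · rw [← Real.rpow_add hA₀, ← Real.rpow_add hA₀, add_assoc, one_div, one_div,
            hqrp.inv_add_inv_eq_inv, sub_add_cancel, Real.rpow_one]

end TensorNorms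

theorem injNorm_le_muPlus_le_projNorm_general
    (p q r : ℝ) (hp : 1 ≤ p) (hq : 1 ≤ q) (hr : 1 ≤ r) (hpqr : 1 / p = 1 / q + 1 / r)
    (u : (⨂[ℝ] j, E j) ⊗[ℝ] F) :
    injNorm u ≤ muPlus p q r u ∧ muPlus p q r u ≤ projNorm u := by
  have hqrp : q.HolderTriple r p :=
    ⟨by simpa only [one_div] using hpqr.symm, zero_lt_one.trans_le hq, zero_lt_one.trans_le hr⟩
  refine ⟨le_muPlus fun n lam x y hu => injNorm_le_of_eq_sum hqrp hu,
    le_projNorm fun n lam x y hu => ?_⟩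
  rcases isEmpty_or_nonempty (Fin m) with hm | ⟨⟨j₀⟩⟩
  · exact muPlus_le_sum_of_isEmpty hqrp.pos' hqrp.pos hqrp.symm.pos hu
  · exact muPlus_le_sum_of_nonempty hp hqrp j₀ hu

/-- `ε ≤ μ⁺_{(q,r)} ≤ π`: the norm `μ⁺_{(q,r)}` is reasonable. -/
theorem injNorm_le_muPlus_le_projNorm [∀ i, CompleteSpace (E i)] [CompleteSpace F]
    (p q r : ℝ) (hp : 1 ≤ p) (hq : 1 ≤ q) (hr : 1 ≤ r) (hpqr : 1 / p = 1 / q + 1 / r)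
    (u : (⨂[ℝ] j, E j) ⊗[ℝ] F) :
    injNorm u ≤ muPlus p q r u ∧ muPlus p q r u ≤ projNorm u :=
  injNorm_le_muPlus_le_projNorm_general p q r hp hq hr hpqr u

end
end

section
/- Let 1 ≤ p, q, r ≤ ∞ with 1/p = 1/q + 1/r. If T : E₁ × ⋯ × E_m → F factors as T = u ∘ S where S : E₁ × ⋯ × E_m → G is a positive Dimant strongly q-summing m-linear operator (admitting a domination (∗): ‖S(x¹,...,x^m)‖ ≤ d_{s}(S)(∫_{B⁺} φ(x¹,...,x^m)^q dμ)^{1/q} on positive tuples) and u : G → F is a Cohen positive strongly r-summing linear operator (admitting ⟨u(z), y*⟩ ≤ d(u)‖z‖(∫_{B⁺_{F**}} ⟨y*, y**⟩^r dη)^{1/r} for z ≥ 0, y* ≥ 0), then T is positive weakly (q,r)-dominated. -/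
open scoped BigOperators
open MeasureTheory

section

variable {m : ℕ} {E : Fin m → Type*}
  [∀ i, NormedAddCommGroup (E i)] [∀ i, Lattice (E i)]
  [∀ i, IsOrderedAddMonoid (E i)] [∀ i, HasSolidNorm (E i)] [∀ i, NormedSpace ℝ (E i)]
  {G F : Type*} [NormedAddCommGroup G] [Lattice G] [IsOrderedAddMonoid G]
  [HasSolidNorm G] [NormedSpace ℝ G]
  [NormedAddCommGroup F] [Lattice F] [IsOrderedAddMonoid F]
  [HasSolidNorm F] [NormedSpace ℝ F]

/-- A functional on a Banach lattice is positive if it is nonnegative on the positive cone. -/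
def IsPosFunc {H : Type*} [NormedAddCommGroup H] [Lattice H]
    [IsOrderedAddMonoid H] [HasSolidNorm H] [NormedSpace ℝ H]
    (f : H →L[ℝ] ℝ) : Prop := ∀ y : H, 0 ≤ y → 0 ≤ f y

/-- `sup_{φ ∈ B⁺_{L^r}} (∑ᵢ φ(x_i^1,…,x_i^m)^q)^{1/q}`. -/
noncomputable def posFormBallSup (q : ℝ) {n : ℕ} (x : Fin n → ∀ j, E j) : ℝ :=
  ⨆ φ : {φ : ContinuousMultilinearMap ℝ E ℝ // ‖φ‖ ≤ 1 ∧ IsPosForm φ},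
    (∑ i, (φ.1 (x i)) ^ q) ^ (1 / q)

/-- `sup_{y** ∈ B⁺_{F**}} (∑ᵢ ⟨y_i*, y**⟩^r)^{1/r}`. -/
noncomputable def posBidualBallSup (r : ℝ) {n : ℕ} (y : Fin n → F →L[ℝ] ℝ) : ℝ :=
  ⨆ Φ : {Φ : (F →L[ℝ] ℝ) →L[ℝ] ℝ // ‖Φ‖ ≤ 1 ∧ ∀ g, IsPosFunc g → 0 ≤ Φ g},
    (∑ i, (Φ.1 (y i)) ^ r) ^ (1 / r)

/-- `T` is positive weakly `(q,r)`-dominated with constant `C`. -/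
def PWDC (p q r : ℝ) (T : ContinuousMultilinearMap ℝ E F) (C : ℝ) : Prop :=
  ∀ (n : ℕ) (x : Fin n → ∀ j, E j) (y : Fin n → F →L[ℝ] ℝ),
    (∀ i j, 0 ≤ x i j) → (∀ i, IsPosFunc (y i)) →
    (∑ i, ((y i) (T (x i))) ^ p) ^ (1 / p) ≤
      C * posFormBallSup q x * posBidualBallSup r y

noncomputable local instance :
    MeasurableSpace {φ : ContinuousMultilinearMap ℝ E ℝ // ‖φ‖ ≤ 1 ∧ IsPosForm φ} :=
  borel _

noncomputable local instance :
    MeasurableSpace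
      {Φ : (F →L[ℝ] ℝ) →L[ℝ] ℝ // ‖Φ‖ ≤ 1 ∧ ∀ g, IsPosFunc g → 0 ≤ Φ g} :=
  borel _


/-! Since `yᵢ* ∘ u` is a positive functional, `|⟨yᵢ*, u z⟩| ≤ ⟨yᵢ*, u |z|⟩`, so the domination of
`u` extends from `z ≥ 0` to `z = S xᵢ`; composed with the domination of `S` it gives
`|⟨yᵢ*, T xᵢ⟩| ≤ d(u) d_s(S) aᵢ bᵢ` with `aᵢ = ‖φ ↦ φ(xᵢ)‖_{L^q(μ)}`, `bᵢ = ‖y** ↦ y**(yᵢ*)‖_{L^r(η)}`.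
Hölder's inequality for `1/p = 1/q + 1/r` bounds `‖(aᵢ bᵢ)‖_{ℓ^p}` by `‖a‖_{ℓ^q} ‖b‖_{ℓ^r}`, and
`‖a‖_{ℓ^q}^q = ∫ ∑ᵢ φ(xᵢ)^q dμ` is at most the `q`-th power of the supremum over `B⁺` because `μ`
is a probability measure; likewise for `b`. -/

/-- The `ℓ^p` norm of a nonnegative family, in the form it takes in `PWDC`, where entries may be
negative and `aᵢ ^ p` is then a junk value of `Real.rpow`. -/
noncomputable def finLpNorm {ι : Type*} [Fintype ι] (p : ℝ) (a : ι → ℝ) : ℝ :=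
  (∑ i, a i ^ p) ^ (1 / p)

section finLpNorm

variable {ι : Type*} [Fintype ι] {p : ℝ} {a b : ι → ℝ}

lemma finLpNorm_nonneg (ha : ∀ i, 0 ≤ a i) : 0 ≤ finLpNorm p a :=
  Real.rpow_nonneg (Finset.sum_nonneg fun i _ => Real.rpow_nonneg (ha i) p) _

lemma abs_rpow_le_rpow_of_abs_le {x y e : ℝ} (h : |x| ≤ y) (he : 0 ≤ e) : |x ^ e| ≤ y ^ e :=
  (Real.abs_rpow_le_abs_rpow x e).trans (Real.rpow_le_rpow (abs_nonneg x) h he)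

lemma finLpNorm_le_of_abs_le (hp : 0 < p) (h : ∀ i, |a i| ≤ b i) :
    finLpNorm p a ≤ finLpNorm p b := by
  have hsum : |∑ i, a i ^ p| ≤ ∑ i, b i ^ p :=
    (Finset.abs_sum_le_sum_abs _ _).trans
      (Finset.sum_le_sum fun i _ => abs_rpow_le_rpow_of_abs_le (h i) hp.le)
  exact (le_abs_self _).trans (abs_rpow_le_rpow_of_abs_le hsum (by positivity))

lemma finLpNorm_const_mul (hp : p ≠ 0) {c : ℝ} (hc : 0 ≤ c) (ha : ∀ i, 0 ≤ a i) :
    finLpNorm p (fun i => c * a i) = c * finLpNorm p a := by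
  have hsum : 0 ≤ ∑ i, a i ^ p := Finset.sum_nonneg fun i _ => Real.rpow_nonneg (ha i) p
  simp only [finLpNorm, Real.mul_rpow hc (ha _), ← Finset.mul_sum,
    Real.mul_rpow (Real.rpow_nonneg hc p) hsum, one_div, Real.rpow_rpow_inv hc hp]

lemma finLpNorm_mul_le {q r : ℝ} (hqrp : q.HolderTriple r p) (ha : ∀ i, 0 ≤ a i)
    (hb : ∀ i, 0 ≤ b i) :
    finLpNorm p (fun i => a i * b i) ≤ finLpNorm q a * finLpNorm r b := by
  lift a to ι → NNReal using ha
  lift b to ι → NNReal using hb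
  have := NNReal.Lr_le_Lp_mul_Lq Finset.univ a b hqrp
  simp only [finLpNorm]
  exact_mod_cast this

end finLpNorm

/-- No measurability is needed: a non-integrable `f i` has integral `0`. -/
lemma sum_integral_le_of_forall_sum_le {α ι : Type*} [Fintype ι] {_ : MeasurableSpace α}
    (μ : Measure α) [IsProbabilityMeasure μ] {f : ι → α → ℝ} (hf : ∀ i a, 0 ≤ f i a) {C : ℝ}
    (hC : ∀ a, ∑ i, f i a ≤ C) :
    ∑ i, ∫ a, f i a ∂μ ≤ C := by
  classical
  set s := Finset.univ.filter fun i => Integrable (f i) μ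
  have hs : ∀ i ∈ s, Integrable (f i) μ := fun i hi => (Finset.mem_filter.mp hi).2
  calc ∑ i, ∫ a, f i a ∂μ = ∑ i ∈ s, ∫ a, f i a ∂μ :=
        (Finset.sum_subset s.subset_univ fun i _ hi =>
          integral_undef fun h => hi (Finset.mem_filter.mpr ⟨Finset.mem_univ i, h⟩)).symm
    _ = ∫ a, ∑ i ∈ s, f i a ∂μ := (integral_finsetSum s hs).symm
    _ ≤ ∫ _, C ∂μ := integral_mono (integrable_finsetSum s hs) (integrable_const C) fun a =>
        (Finset.sum_le_sum_of_subset_of_nonneg s.subset_univ fun i _ _ => hf i a).trans (hC a)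
    _ = C := by simp

lemma finLpNorm_integral_le {α ι : Type*} [Fintype ι] {_ : MeasurableSpace α}
    (μ : Measure α) [IsProbabilityMeasure μ] {f : ι → α → ℝ} (hf : ∀ i a, 0 ≤ f i a) {q M : ℝ}
    (hq : 0 < q) (hM : ∀ a, finLpNorm q (fun i => f i a) ≤ M) :
    finLpNorm q (fun i => (∫ a, f i a ^ q ∂μ) ^ (1 / q)) ≤ M := by
  obtain ⟨a₀⟩ := nonempty_of_isProbabilityMeasure μ
  have hM0 : 0 ≤ M := (finLpNorm_nonneg (hf · a₀)).trans (hM a₀)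
  have hpow : ∀ {s : ℝ}, 0 ≤ s → (s ^ (1 / q) ≤ M ↔ s ≤ M ^ q) := fun hs => by
    rw [one_div]; exact Real.rpow_inv_le_iff_of_pos hs hM0 hq
  have hint : ∀ i, 0 ≤ ∫ a, f i a ^ q ∂μ :=
    fun i => integral_nonneg fun a => Real.rpow_nonneg (hf i a) q
  have hsum : ∀ a, 0 ≤ ∑ i, f i a ^ q :=
    fun a => Finset.sum_nonneg fun i _ => Real.rpow_nonneg (hf i a) q
  simp only [finLpNorm, one_div, Real.rpow_inv_rpow (hint _) hq.ne'] at hM ⊢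
  rw [← one_div, hpow (Finset.sum_nonneg fun i _ => hint i)]
  exact sum_integral_le_of_forall_sum_le μ (fun i a => Real.rpow_nonneg (hf i a) q)
    fun a => (hpow (hsum a)).mp (by simpa only [one_div] using hM a)

lemma abs_apply_le_apply_abs {H β Fn : Type*} [Lattice H] [AddCommGroup H]
    [IsOrderedAddMonoid H] [AddCommGroup β] [LinearOrder β] [IsOrderedAddMonoid β]
    [FunLike Fn H β] [AddMonoidHomClass Fn H β] (f : Fn) (hf : ∀ w, 0 ≤ w → 0 ≤ f w) (z : H) :
    |f z| ≤ f |z| := by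
  have hpos := hf _ (posPart_nonneg z)
  have hneg := hf _ (negPart_nonneg z)
  rw [← posPart_add_negPart z, map_add]
  conv_lhs => rw [← posPart_sub_negPart z, map_sub]
  simpa only [abs_of_nonneg hpos, abs_of_nonneg hneg] using abs_sub (f z⁺) (f z⁻)

lemma abs_apply_le_of_forall_nonneg_le {H Fn : Type*} [NormedAddCommGroup H] [Lattice H]
    [IsOrderedAddMonoid H] [HasSolidNorm H] [FunLike Fn H ℝ] [AddMonoidHomClass Fn H ℝ]
    (f : Fn) (hf : ∀ w, 0 ≤ w → 0 ≤ f w) {c : ℝ} (hc : ∀ w, 0 ≤ w → f w ≤ c * ‖w‖) (z : H) :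
    |f z| ≤ c * ‖z‖ := by
  simpa only [norm_abs_eq_norm] using
    (abs_apply_le_apply_abs f hf z).trans (hc |z| (abs_nonneg z))

set_option linter.unusedSectionVars false in
lemma finLpNorm_le_posFormBallSup {q : ℝ} (hq : 0 < q) {n : ℕ} (x : Fin n → ∀ j, E j)
    (φ : {φ : ContinuousMultilinearMap ℝ E ℝ // ‖φ‖ ≤ 1 ∧ IsPosForm φ}) :
    finLpNorm q (fun i => φ.1 (x i)) ≤ posFormBallSup q x := by
  refine le_ciSup (f := fun ψ : type_of% φ => finLpNorm q fun i => ψ.1 (x i))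
    ⟨finLpNorm q (fun i => ∏ j, ‖x i j‖), ?_⟩ φ
  rintro _ ⟨ψ, rfl⟩
  refine finLpNorm_le_of_abs_le hq fun i => (ψ.1.le_opNorm _).trans ?_
  exact mul_le_of_le_one_left (Finset.prod_nonneg fun j _ => norm_nonneg _) ψ.2.1

set_option linter.unusedSectionVars false in
lemma finLpNorm_le_posBidualBallSup {r : ℝ} (hr : 0 < r) {n : ℕ} (y : Fin n → F →L[ℝ] ℝ)
    (Φ : {Φ : (F →L[ℝ] ℝ) →L[ℝ] ℝ // ‖Φ‖ ≤ 1 ∧ ∀ g, IsPosFunc g → 0 ≤ Φ g}) :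
    finLpNorm r (fun i => Φ.1 (y i)) ≤ posBidualBallSup r y := by
  refine le_ciSup (f := fun Ψ : type_of% Φ => finLpNorm r fun i => Ψ.1 (y i))
    ⟨finLpNorm r (fun i => ‖y i‖), ?_⟩ Φ
  rintro _ ⟨Ψ, rfl⟩
  refine finLpNorm_le_of_abs_le hr fun i => (Ψ.1.le_opNorm _).trans ?_
  exact mul_le_of_le_one_left (norm_nonneg _) Ψ.2.1

theorem pwd_of_factorization_general
    (p q r : ℝ) (hq : 1 ≤ q) (hr : 1 ≤ r) (hpqr : 1 / p = 1 / q + 1 / r)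
    (T : ContinuousMultilinearMap ℝ E F)
    (S : ContinuousMultilinearMap ℝ E G) (u : G →L[ℝ] F)
    (hu_pos : ∀ z : G, 0 ≤ z → 0 ≤ u z)
    (hcomp : ∀ x : ∀ j, E j, T x = u (S x))
    (μ : Measure {φ : ContinuousMultilinearMap ℝ E ℝ // ‖φ‖ ≤ 1 ∧ IsPosForm φ})
    (η : Measure {Φ : (F →L[ℝ] ℝ) →L[ℝ] ℝ // ‖Φ‖ ≤ 1 ∧ ∀ g, IsPosFunc g → 0 ≤ Φ g})
    (hμ : IsProbabilityMeasure μ) (hη : IsProbabilityMeasure η)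
    (dS : ℝ) (hdS : 0 ≤ dS)
    (hS : ∀ x : ∀ j, E j, (∀ j, 0 ≤ x j) →
      ‖S x‖ ≤ dS * (∫ φ, (φ.1 x) ^ q ∂μ) ^ (1 / q))
    (du : ℝ) (hdu : 0 ≤ du)
    (hu : ∀ (z : G) (g : F →L[ℝ] ℝ), 0 ≤ z → IsPosFunc g →
      g (u z) ≤ du * ‖z‖ * (∫ Φ, (Φ.1 g) ^ r ∂η) ^ (1 / r)) :
    ∃ C, 0 ≤ C ∧ PWDC p q r T C := by
  have hqrp : q.HolderTriple r p :=
    ⟨by simpa only [one_div] using hpqr.symm, by linarith, by linarith⟩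
  refine ⟨du * dS, mul_nonneg hdu hdS, fun n x y hx hy => ?_⟩
  set A : Fin n → ℝ := fun i => (∫ φ, φ.1 (x i) ^ q ∂μ) ^ (1 / q)
  set B : Fin n → ℝ := fun i => (∫ Φ, Φ.1 (y i) ^ r ∂η) ^ (1 / r)
  have hA : ∀ i, 0 ≤ A i := fun i =>
    Real.rpow_nonneg (integral_nonneg fun φ => Real.rpow_nonneg (φ.2.2 _ (hx i)) q) _
  have hB : ∀ i, 0 ≤ B i := fun i =>
    Real.rpow_nonneg (integral_nonneg fun Φ => Real.rpow_nonneg (Φ.2.2 _ (hy i)) r) _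
  have hTxy : ∀ i, |y i (T (x i))| ≤ du * dS * (A i * B i) := fun i => by
    have hyu := abs_apply_le_of_forall_nonneg_le ((y i).comp u)
      (fun w hw => hy i _ (hu_pos w hw)) (c := du * B i)
      (fun w hw => (hu w (y i) hw (hy i)).trans_eq (by ring)) (S (x i))
    calc |y i (T (x i))| ≤ du * B i * ‖S (x i)‖ := by rwa [hcomp]
      _ ≤ du * B i * (dS * A i) :=
          mul_le_mul_of_nonneg_left (hS _ (hx i)) (mul_nonneg hdu (hB i))
      _ = du * dS * (A i * B i) := by ring
  have hAx : finLpNorm q A ≤ posFormBallSup q x :=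
    finLpNorm_integral_le μ (fun i φ => φ.2.2 _ (hx i)) hqrp.pos
      (finLpNorm_le_posFormBallSup hqrp.pos x)
  have hBy : finLpNorm r B ≤ posBidualBallSup r y :=
    finLpNorm_integral_le η (fun i Φ => Φ.2.2 _ (hy i)) hqrp.symm.pos
      (finLpNorm_le_posBidualBallSup hqrp.symm.pos y)
  calc finLpNorm p (fun i => y i (T (x i)))
      ≤ finLpNorm p (fun i => du * dS * (A i * B i)) := finLpNorm_le_of_abs_le hqrp.pos' hTxy
    _ = du * dS * finLpNorm p (fun i => A i * B i) :=
        finLpNorm_const_mul hqrp.ne_zero' (mul_nonneg hdu hdS) fun i => mul_nonneg (hA i) (hB i)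
    _ ≤ du * dS * (finLpNorm q A * finLpNorm r B) := by
        gcongr; exact finLpNorm_mul_le hqrp hA hB
    _ ≤ du * dS * (posFormBallSup q x * posBidualBallSup r y) := by
        gcongr
        exacts [finLpNorm_nonneg hB, (finLpNorm_nonneg hA).trans hAx]
    _ = du * dS * posFormBallSup q x * posBidualBallSup r y := by ring

/-- If `T = u ∘ S` with `S` a positive (Dimant) strongly `q`-summing `m`-linear operator
and `u` a Cohen positive strongly `r`-summing positive linear operator, then `T` is
positive weakly `(q,r)`-dominated. -/
theorem pwd_of_factorization [∀ i, CompleteSpace (E i)] [CompleteSpace G] [CompleteSpace F]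
    (p q r : ℝ) (hp : 1 ≤ p) (hq : 1 ≤ q) (hr : 1 ≤ r) (hpqr : 1 / p = 1 / q + 1 / r)
    (T : ContinuousMultilinearMap ℝ E F)
    (S : ContinuousMultilinearMap ℝ E G) (u : G →L[ℝ] F)
    (hu_pos : ∀ z : G, 0 ≤ z → 0 ≤ u z)
    (hcomp : ∀ x : ∀ j, E j, T x = u (S x))
    (μ : Measure {φ : ContinuousMultilinearMap ℝ E ℝ // ‖φ‖ ≤ 1 ∧ IsPosForm φ})
    (η : Measure {Φ : (F →L[ℝ] ℝ) →L[ℝ] ℝ // ‖Φ‖ ≤ 1 ∧ ∀ g, IsPosFunc g → 0 ≤ Φ g})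
    (hμ : IsProbabilityMeasure μ) (hη : IsProbabilityMeasure η)
    (dS : ℝ) (hdS : 0 ≤ dS)
    (hS : ∀ x : ∀ j, E j, (∀ j, 0 ≤ x j) →
      ‖S x‖ ≤ dS * (∫ φ, (φ.1 x) ^ q ∂μ) ^ (1 / q))
    (du : ℝ) (hdu : 0 ≤ du)
    (hu : ∀ (z : G) (g : F →L[ℝ] ℝ), 0 ≤ z → IsPosFunc g →
      g (u z) ≤ du * ‖z‖ * (∫ Φ, (Φ.1 g) ^ r ∂η) ^ (1 / r)) :
    ∃ C, 0 ≤ C ∧ PWDC p q r T C :=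
  pwd_of_factorization_general p q r hq hr hpqr T S u hu_pos hcomp μ η hμ hη dS hdS hS du hdu hu

end
end
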